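/- For the simple Brownian motion sampled at points α^n with λ = α^T, the covariance satisfies R_n^H(kT+v) = α^{(k+2)T H' + n} when v + n ≤ T − 1, and R_n^H(kT+v) = α^{(k+3)T H' + n} when v + n ≥ T, for n, v ∈ {0,…,T−1}, k ≥ 0, where H' = H − 1/2 and R_n^H(τ) = Cov(X(α^{n+τ}), X(α^n)). -/
import Mathlib


open MeasureTheory

/-- The simple Brownian motion `X(t) = Σ_{n≥1} λ^{n(H-1/2)} 1_{[λ^{n-1}, λ^n)}(t) B(t)`
(the sum is reindexed by `n ↦ n+1`). -/
noncomputable def simpleBM {Ω : Type*} (lam H : ℝ) (B : ℝ → Ω → ℝ) (t : ℝ) (ω : Ω) : ℝ :=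
  ∑' n : ℕ, Set.indicator (Set.Ico (lam ^ n) (lam ^ (n + 1)))
    (fun _ => lam ^ (((n : ℝ) + 1) * (H - 1 / 2)) * B t ω) t

/-- `R_n^H(τ) = Cov(X(α^{n+τ}), X(α^n))` for the simple BM sampled at powers of `α`. -/
noncomputable def covSample {Ω : Type*} [MeasurableSpace Ω] (μ : Measure Ω)
    (lam H α : ℝ) (B : ℝ → Ω → ℝ) (n τ : ℕ) : ℝ :=
  (∫ ω, simpleBM lam H B (α ^ (n + τ)) ω * simpleBM lam H B (α ^ n) ω ∂μ)
    - (∫ ω, simpleBM lam H B (α ^ (n + τ)) ω ∂μ) *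
      (∫ ω, simpleBM lam H B (α ^ n) ω ∂μ)

lemma simpleBM_at {Ω : Type*} (α H : ℝ) (T : ℕ) (hα : 1 < α)
    (B : ℝ → Ω → ℝ) (m p : ℕ) (h1 : p * T ≤ m) (h2 : m < (p + 1) * T) (ω : Ω) :
    simpleBM (α ^ T) H B (α ^ m) ω
      = (α ^ T) ^ (((p : ℝ) + 1) * (H - 1 / 2)) * B (α ^ m) ω := by
  have hα0 : (0:ℝ) < α := lt_trans one_pos hα
  unfold simpleBM
  rw [tsum_eq_single p]
  · rw [Set.indicator_of_mem]
    refine ⟨?_, ?_⟩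
    · rw [← pow_mul]
      exact pow_le_pow_right₀ hα.le (by nlinarith [h1])
    · rw [← pow_mul]
      exact pow_lt_pow_right₀ hα (by nlinarith [h2])
  · intro j hj
    rw [Set.indicator_of_notMem]
    intro hmem
    rcases lt_or_gt_of_ne hj with hlt | hgt
    · have : (α ^ T) ^ (j + 1) ≤ α ^ m := by
        rw [← pow_mul]
        refine pow_le_pow_right₀ hα.le ?_
        have : (j + 1) * T ≤ p * T := Nat.mul_le_mul_right T hlt
        nlinarith [this, h1, h2]
      exact absurd hmem.2 (not_lt.mpr this)
    · have : α ^ m < (α ^ T) ^ j := by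
        rw [← pow_mul]
        refine pow_lt_pow_right₀ hα ?_
        have : (p + 1) * T ≤ j * T := Nat.mul_le_mul_right T hgt
        nlinarith [this, h1, h2]
      exact absurd hmem.1 (not_le.mpr this)

lemma covSample_key {Ω : Type*} [MeasurableSpace Ω] (μ : Measure Ω) [IsProbabilityMeasure μ]
    (α H : ℝ) (T : ℕ) (hα : 1 < α) (hT : 1 ≤ T)
    (B : ℝ → Ω → ℝ)
    (hBmean : ∀ t : ℝ, 0 ≤ t → ∫ ω, B t ω ∂μ = 0)
    (hBcov : ∀ t s : ℝ, 0 ≤ t → 0 ≤ s → ∫ ω, B t ω * B s ω ∂μ = min t s)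
    (n τ p : ℕ) (hn : n < T) (hp1 : p * T ≤ n + τ) (hp2 : n + τ < (p + 1) * T) :
    covSample μ (α ^ T) H α B n τ
      = α ^ (((p : ℝ) + 2) * (T : ℝ) * (H - 1 / 2) + (n : ℝ)) := by
  have hα0 : (0:ℝ) < α := lt_trans one_pos hα
  have hn1 : 0 * T ≤ n := by omega
  have hn2 : n < (0 + 1) * T := by omega
  have ht0 : (0:ℝ) ≤ α ^ (n + τ) := by positivity
  have hs0 : (0:ℝ) ≤ α ^ n := by positivity
  set c1 := (α ^ T) ^ (((p : ℝ) + 1) * (H - 1 / 2)) with hc1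
  set c2 := (α ^ T) ^ ((((0:ℕ) : ℝ) + 1) * (H - 1 / 2)) with hc2
  have e1 : ∀ ω, simpleBM (α ^ T) H B (α ^ (n + τ)) ω = c1 * B (α ^ (n + τ)) ω :=
    simpleBM_at α H T hα B (n + τ) p hp1 hp2
  have e2 : ∀ ω, simpleBM (α ^ T) H B (α ^ n) ω = c2 * B (α ^ n) ω :=
    simpleBM_at α H T hα B n 0 hn1 hn2
  unfold covSample
  simp only [e1, e2]
  have e3 : ∀ ω, c1 * B (α ^ (n + τ)) ω * (c2 * B (α ^ n) ω)
      = (c1 * c2) * (B (α ^ (n + τ)) ω * B (α ^ n) ω) := fun ω => by ring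
  simp only [e3]
  rw [integral_const_mul, integral_const_mul, integral_const_mul,
      hBmean _ ht0, hBmean _ hs0, hBcov _ _ ht0 hs0]
  have hmin : min (α ^ (n + τ)) (α ^ n) = α ^ n :=
    min_eq_right (pow_le_pow_right₀ hα.le (Nat.le_add_right n τ))
  rw [hmin]
  rw [hc1, hc2, ← Real.rpow_natCast α T, ← Real.rpow_natCast α n,
      ← Real.rpow_mul hα0.le, ← Real.rpow_mul hα0.le,
      ← Real.rpow_add hα0, ← Real.rpow_add hα0]
  ring_nf

theorem simpleBM_covariance_sampled
    {Ω : Type*} [MeasurableSpace Ω] (μ : Measure Ω) [IsProbabilityMeasure μ]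
    (α H : ℝ) (T : ℕ) (hα : 1 < α) (hH : 0 < H) (hT : 1 ≤ T)
    (B : ℝ → Ω → ℝ)
    (hBmean : ∀ t : ℝ, 0 ≤ t → ∫ ω, B t ω ∂μ = 0)
    (hBcov : ∀ t s : ℝ, 0 ≤ t → 0 ≤ s → ∫ ω, B t ω * B s ω ∂μ = min t s) :
    ∀ n v k : ℕ, n < T → v < T →
      (v + n + 1 ≤ T →
        covSample μ (α ^ T) H α B n (k * T + v)
          = α ^ (((k : ℝ) + 2) * (T : ℝ) * (H - 1 / 2) + (n : ℝ))) ∧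
      (T ≤ v + n →
        covSample μ (α ^ T) H α B n (k * T + v)
          = α ^ (((k : ℝ) + 3) * (T : ℝ) * (H - 1 / 2) + (n : ℝ))) := by
  intro n v k hn hv
  have h1 : (k + 1) * T = k * T + T := by ring
  have h2 : (k + 2) * T = k * T + 2 * T := by ring
  have h3 : (k + 1 + 1) * T = k * T + 2 * T := by ring
  constructor
  · intro hle
    exact covSample_key μ α H T hα hT B hBmean hBcov n (k * T + v) k hn
      (by omega) (by omega)
  · intro hge
    have := covSample_key μ α H T hα hT B hBmean hBcov n (k * T + v) (k + 1) hn
      (by omega) (by omega)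
    rw [this]
    congr 1
    push_cast
    ring
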